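/- Let H ≤ G be finite groups each with a supercharacter theory, consistent in the sense that every superclass of H is contained in a superclass of G. Define the transition measure ρ_H^G(γ,χ) := (|H|/|G|)·(χ(1)/γ(1))·⟨SInd_H^G(γ),χ⟩/⟨χ,χ⟩ for γ ∈ SCh(H), χ ∈ SCh(G). Then for each χ ∈ SCh(G): Σ_{γ∈SCh(H)} ρ_H^G(γ,χ)·SPl_H(γ) = SPl_G(χ). -/

import Mathlib

open scoped BigOperators
open Finset Classical

/-- The Frobenius scalar product `⟨f,g⟩ = (1/|X|) Σ_x f(x) conj(g(x))`. -/
noncomputable def frob (X : Type*) [Fintype X] (f g : X → ℂ) : ℂ :=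
  (Fintype.card X : ℂ)⁻¹ * ∑ x : X, f x * (starRingEnd ℂ) (g x)

/-- Extension by zero of `γ : H → ℂ` to `G`. -/
noncomputable def extZero {G : Type*} [Group G] (H : Subgroup G) (γ : H → ℂ) : G → ℂ :=
  fun g => if h : g ∈ H then γ ⟨g, h⟩ else 0

/-- Superinduction: `SInd_H^G(γ)(g) = (|G|/(|H|·|[g]|)) Σ_{k∈[g]} γ⁰(k)`. -/
noncomputable def SInd {G : Type*} [Group G] [Fintype G] (H : Subgroup G)
    (cls : G → Finset G) (γ : H → ℂ) : G → ℂ :=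
  fun g => ((Fintype.card G : ℂ) / ((Nat.card H : ℂ) * ((cls g).card : ℂ))) *
    ∑ k ∈ cls g, extZero H γ k

/-- The transition measure
`ρ_H^G(γ,χ) = (|H|/|G|)·(χ(1)/γ(1))·⟨SInd_H^G(γ),χ⟩/⟨χ,χ⟩`. -/
noncomputable def transMeas {G : Type*} [Group G] [Fintype G] (H : Subgroup G)
    (cls : G → Finset G) (γ : H → ℂ) (χ : G → ℂ) : ℂ :=
  ((Nat.card H : ℂ) / (Fintype.card G : ℂ)) * (χ 1 / γ 1) *
    (frob G (SInd H cls γ) χ / frob G χ χ)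

/-- The superplancherel measure `SPl(χ) = (1/|X|)·χ(1)²/⟨χ,χ⟩` for a group `X`. -/
noncomputable def SPl (X : Type*) [Group X] [Fintype X] (χ : X → ℂ) : ℂ :=
  (Fintype.card X : ℂ)⁻¹ * (χ 1) ^ 2 / frob X χ χ

/-! The factor `γ(1)` of `SPl_H(γ)` cancels against the `1/γ(1)` of `ρ_H^G(γ,χ)`, so by Frobenius
reciprocity the left side is `χ(1)/(|G|⟨χ,χ⟩)` times `Σ_γ ⟨γ,Res χ⟩/⟨γ,γ⟩ · γ(1)`, which is the
expansion of `Res χ` evaluated at `1`, i.e. `χ(1)`. -/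

theorem transMeas_mul_SPl {G : Type*} [Group G] [Fintype G] (H : Subgroup G)
    (cls : G → Finset G) (γ : H → ℂ) (χ : G → ℂ) :
    transMeas H cls γ χ * SPl H γ =
      (Fintype.card G : ℂ)⁻¹ * χ 1 / frob G χ χ *
        (frob G (SInd H cls γ) χ / frob H γ γ * γ 1) := by
  by_cases hγ : γ 1 = 0
  · simp [transMeas, hγ]
  · have hH : (Fintype.card H : ℂ) ≠ 0 := Nat.cast_ne_zero.mpr Fintype.card_ne_zero
    rw [transMeas, SPl, Nat.card_eq_fintype_card]
    field_simp

theorem stmt4_general (G : Type*) [Group G] [Fintype G] (H : Subgroup G)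
    (cls : G → Finset G)
    (SChG : Finset (G → ℂ)) (SChH : Finset (↥H → ℂ))
    -- Frobenius reciprocity for superinduction (may be assumed)
    (hrecip : ∀ γ ∈ SChH, ∀ χ ∈ SChG,
      frob G (SInd H cls γ) χ = frob (↥H) γ (fun x : H => χ (x : G)))
    -- consistency: restrictions of supercharacters of `G` are superclass functions on
    -- `H`, hence expand in the supercharacters of `H`
    (hexp : ∀ χ ∈ SChG, (fun x : H => χ (x : G)) =
      ∑ γ ∈ SChH, (frob (↥H) γ (fun x : H => χ (x : G)) / frob (↥H) γ γ) • γ)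
    (χ : G → ℂ) (hχ : χ ∈ SChG) :
    ∑ γ ∈ SChH, transMeas H cls γ χ * SPl (↥H) γ = SPl G χ := by
  have hdeg : χ 1 = ∑ γ ∈ SChH, frob (↥H) γ (fun x : H => χ (x : G)) / frob (↥H) γ γ * γ 1 := by
    simpa [Finset.sum_apply] using congrFun (hexp χ hχ) 1
  calc ∑ γ ∈ SChH, transMeas H cls γ χ * SPl (↥H) γ
      = ∑ γ ∈ SChH, (Fintype.card G : ℂ)⁻¹ * χ 1 / frob G χ χ *
          (frob (↥H) γ (fun x : H => χ (x : G)) / frob (↥H) γ γ * γ 1) :=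
        sum_congr rfl fun γ hγ => by rw [transMeas_mul_SPl, hrecip γ hγ χ hχ]
    _ = (Fintype.card G : ℂ)⁻¹ * χ 1 / frob G χ χ * χ 1 := by rw [← mul_sum, ← hdeg]
    _ = SPl G χ := by rw [SPl]; ring

/-- for consistent supercharacter theories on `H ≤ G`, the transition
measure intertwines the superplancherel measures:
`Σ_{γ∈SCh(H)} ρ_H^G(γ,χ)·SPl_H(γ) = SPl_G(χ)` for each `χ ∈ SCh(G)`. -/
theorem stmt4 (G : Type*) [Group G] [Fintype G] (H : Subgroup G)
    (cls : G → Finset G)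
    (hmem : ∀ g : G, g ∈ cls g)
    (hcls : ∀ g h : G, h ∈ cls g → cls h = cls g)
    (SChG : Finset (G → ℂ)) (SChH : Finset (↥H → ℂ))
    (hdegG : ∀ χ ∈ SChG, χ 1 ≠ 0) (hdegH : ∀ γ ∈ SChH, γ 1 ≠ 0)
    (hnG : ∀ χ ∈ SChG, frob G χ χ ≠ 0) (hnH : ∀ γ ∈ SChH, frob (↥H) γ γ ≠ 0)
    -- Frobenius reciprocity for superinduction (may be assumed)
    (hrecip : ∀ γ ∈ SChH, ∀ χ ∈ SChG,
      frob G (SInd H cls γ) χ = frob (↥H) γ (fun x : H => χ (x : G)))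
    -- consistency: restrictions of supercharacters of `G` are superclass functions on
    -- `H`, hence expand in the supercharacters of `H`
    (hexp : ∀ χ ∈ SChG, (fun x : H => χ (x : G)) =
      ∑ γ ∈ SChH, (frob (↥H) γ (fun x : H => χ (x : G)) / frob (↥H) γ γ) • γ)
    (χ : G → ℂ) (hχ : χ ∈ SChG) :
    ∑ γ ∈ SChH, transMeas H cls γ χ * SPl (↥H) γ = SPl G χ :=
  stmt4_general G H cls SChG SChH hrecip hexp χ hχ
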